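/- arXiv:2501.18414 — 3 statements merged into one kernel-verified Lean document; each statement's English description precedes it below -/
import Mathlib

section
/- Let (A, ⊣, ⊥, ⊢) be a triassociative algebra over a field K and let β : A → A be an injective averaging operator on A. Then A, equipped with the products x ◁ y = β(x) ⊣ y, x △ y = β(x) ⊥ y, x ▷ y = β(x) ⊢ y, is again a triassociative algebra. -/
structure IsTriassoc (K : Type*) [Field K] {A : Type*} [AddCommGroup A] [Module K A]
    (l m r : A → A → A) : Prop where
  l_lin₁ : ∀ y, IsLinearMap K (fun x => l x y)
  l_lin₂ : ∀ x, IsLinearMap K (fun y => l x y)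
  m_lin₁ : ∀ y, IsLinearMap K (fun x => m x y)
  m_lin₂ : ∀ x, IsLinearMap K (fun y => m x y)
  r_lin₁ : ∀ y, IsLinearMap K (fun x => r x y)
  r_lin₂ : ∀ x, IsLinearMap K (fun y => r x y)
  ax1 : ∀ x y z, l (l x y) z = l x (l y z)
  ax2 : ∀ x y z, r (r x y) z = r x (r y z)
  ax3 : ∀ x y z, m (m x y) z = m x (m y z)
  ax4 : ∀ x y z, l (l x y) z = l x (r y z)
  ax5 : ∀ x y z, l (l x y) z = l x (m y z)
  ax6 : ∀ x y z, l (r x y) z = r x (l y z)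
  ax7 : ∀ x y z, r (l x y) z = r x (r y z)
  ax8 : ∀ x y z, r (m x y) z = r x (r y z)
  ax9 : ∀ x y z, l (m x y) z = m x (l y z)
  ax10 : ∀ x y z, m (l x y) z = m x (r y z)
  ax11 : ∀ x y z, m (r x y) z = r x (m y z)

theorem IsLinearMap.comp_linearMap {R M N P : Type*} [Semiring R] [AddCommMonoid M]
    [AddCommMonoid N] [AddCommMonoid P] [Module R M] [Module R N] [Module R P] {f : N → P}
    (hf : IsLinearMap R f) (g : M →ₗ[R] N) : IsLinearMap R fun x => f (g x) :=
  ((IsLinearMap.mk' f hf).comp g).isLinear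

/-- By `hβ`, the twisted left side is `p₂ (p₁ (β x) (β y)) z`, an instance of `hp`. -/
theorem twist_assoc_of_averaging {A : Type*} {p₁ p₂ p₃ p₄ : A → A → A} (β : A → A)
    (hβ : ∀ x y, p₁ (β x) (β y) = β (p₁ (β x) y))
    (hp : ∀ x y z, p₂ (p₁ x y) z = p₃ x (p₄ y z)) :
    ∀ x y z, p₂ (β (p₁ (β x) y)) z = p₃ (β x) (p₄ (β y) z) := fun x y z => by
  rw [← hβ, hp]

theorem averaging_triassoc_general {K A : Type*} [Field K] [AddCommGroup A] [Module K A]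
    (l m r : A → A → A) (h : IsTriassoc K l m r) (β : A →ₗ[K] A)
    (hl : ∀ x y, l (β x) (β y) = β (l (β x) y) ∧ l (β x) (β y) = β (l x (β y)))
    (hm : ∀ x y, m (β x) (β y) = β (m (β x) y) ∧ m (β x) (β y) = β (m x (β y)))
    (hr : ∀ x y, r (β x) (β y) = β (r (β x) y) ∧ r (β x) (β y) = β (r x (β y))) :
    IsTriassoc K (fun x y => l (β x) y) (fun x y => m (β x) y) (fun x y => r (β x) y) :=
  { l_lin₁ := fun y => (h.l_lin₁ y).comp_linearMap β,
    l_lin₂ := fun x => h.l_lin₂ (β x),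
    m_lin₁ := fun y => (h.m_lin₁ y).comp_linearMap β,
    m_lin₂ := fun x => h.m_lin₂ (β x),
    r_lin₁ := fun y => (h.r_lin₁ y).comp_linearMap β,
    r_lin₂ := fun x => h.r_lin₂ (β x),
    ax1 := twist_assoc_of_averaging β (fun x y => (hl x y).1) h.ax1,
    ax2 := twist_assoc_of_averaging β (fun x y => (hr x y).1) h.ax2,
    ax3 := twist_assoc_of_averaging β (fun x y => (hm x y).1) h.ax3,
    ax4 := twist_assoc_of_averaging β (fun x y => (hl x y).1) h.ax4,
    ax5 := twist_assoc_of_averaging β (fun x y => (hl x y).1) h.ax5,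
    ax6 := twist_assoc_of_averaging β (fun x y => (hr x y).1) h.ax6,
    ax7 := twist_assoc_of_averaging β (fun x y => (hl x y).1) h.ax7,
    ax8 := twist_assoc_of_averaging β (fun x y => (hm x y).1) h.ax8,
    ax9 := twist_assoc_of_averaging β (fun x y => (hm x y).1) h.ax9,
    ax10 := twist_assoc_of_averaging β (fun x y => (hl x y).1) h.ax10,
    ax11 := twist_assoc_of_averaging β (fun x y => (hr x y).1) h.ax11 }

theorem averaging_triassoc {K A : Type*} [Field K] [AddCommGroup A] [Module K A]
    (l m r : A → A → A) (h : IsTriassoc K l m r) (β : A →ₗ[K] A)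
    (hinj : Function.Injective β)
    (hl : ∀ x y, l (β x) (β y) = β (l (β x) y) ∧ l (β x) (β y) = β (l x (β y)))
    (hm : ∀ x y, m (β x) (β y) = β (m (β x) y) ∧ m (β x) (β y) = β (m x (β y)))
    (hr : ∀ x y, r (β x) (β y) = β (r (β x) y) ∧ r (β x) (β y) = β (r x (β y))) :
    IsTriassoc K (fun x y => l (β x) y) (fun x y => m (β x) y) (fun x y => r (β x) y) :=
  averaging_triassoc_general l m r h β hl hm hr
end

section
/- Let (L, [-,-,-]) be a (right) ternary Leibniz algebra over a field K and let N : L → L be a Nijenhuis operator on L. Define a new trilinear bracket by [x,y,z]_N = [N(x),N(y),z] + [N(x),y,N(z)] + [x,N(y),N(z)] − N([N(x),y,z] + [x,y,N(z)] + [x,N(y),z]) + N²([x,y,z]). Then: (1) (L, [-,-,-]_N) is a (right) ternary Leibniz algebra; (2) N is a morphism of ternary Leibniz algebras from (L, [-,-,-]_N) to (L, [-,-,-]); (3) N is a Nijenhuis operator on (L, [-,-,-]_N). -/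
/-!
Write `T = nijBracket b N`, `S = nijBracketLin b N` and `J(μ, ν) = leibnizator μ ν`. The bracket
deformed by `1 + λN` is `b_λ = b + λS + λ²T`, and `(1 + λN) b_λ(x, y, z) = b((1 + λN)x, (1 + λN)y,
(1 + λN)z)` up to the `λ³`-term `N T(x, y, z) - b(Nx, Ny, Nz)`, which the Nijenhuis identity kills.
Over `K⟦λ⟧` the operator `1 + λN` is invertible, so `b_λ` is isomorphic to `b`, hence Leibniz.
Staying inside `L`, we compare coefficients instead. The `λᵏ`-coefficient of `J(b_λ, b_λ)` is
`Σ_{i+j=k} J(A_i, A_j)` with `A = (b, S, T)`, and the `λᵏ`-coefficient of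
`(1 + λN) J(b_λ, b_λ) = J(b, b) ∘ (1 + λN)^⊗5` says that it is `-N` times the previous one, modulo
instances of the Leibniz identity of `b` and, for `k ≥ 3`, of the Nijenhuis identity. By induction
all coefficients vanish; the `λ⁴`-coefficient is `J(T, T)`.

That `N` is a morphism `T → b` and a Nijenhuis operator for `T` both come from `N ∘ T = b ∘ N^⊗3`.
-/

structure IsTernaryLeibnizR (K : Type*) [Field K] {L : Type*} [AddCommGroup L] [Module K L]
    (b : L → L → L → L) : Prop where
  lin₁ : ∀ y z, IsLinearMap K (fun x => b x y z)
  lin₂ : ∀ x z, IsLinearMap K (fun y => b x y z)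
  lin₃ : ∀ x y, IsLinearMap K (fun z => b x y z)
  leib : ∀ x y z t u,
    b (b x y z) t u = b x y (b z t u) + b x (b y t u) z + b (b x t u) y z

/-- The Nijenhuis deformed ternary bracket. -/
def nijBracket {L : Type*} [AddCommGroup L] (b : L → L → L → L) (N : L → L) :
    L → L → L → L :=
  fun x y z =>
    b (N x) (N y) z + b (N x) y (N z) + b x (N y) (N z)
      - N (b (N x) y z + b x y (N z) + b x (N y) z) + N (N (b x y z))

section Brackets

variable {L : Type*} [AddCommGroup L]

def nijBracketLin (b : L → L → L → L) (N : L → L) : L → L → L → L :=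
  fun x y z => b (N x) y z + b x (N y) z + b x y (N z) - N (b x y z)

def leibnizator (μ ν : L → L → L → L) (x y z t u : L) : L :=
  μ (ν x y z) t u - (μ x y (ν z t u) + μ x (ν y t u) z + μ (ν x t u) y z)

def IsNijenhuis (b : L → L → L → L) (N : L → L) : Prop :=
  ∀ x y z, b (N x) (N y) (N z)
    = N (b (N x) (N y) z + b (N x) y (N z) + b x (N y) (N z)
        - N (b (N x) y z + b x (N y) z + b x y (N z)) + N (N (b x y z)))

theorem isNijenhuis_iff_map_nijBracket {b : L → L → L → L} {N : L → L} :
    IsNijenhuis b N ↔ ∀ x y z, N (nijBracket b N x y z) = b (N x) (N y) (N z) := by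
  refine forall₃_congr fun x y z => ?_
  rw [eq_comm, nijBracket, add_right_comm (b (N x) y z) (b x y (N z))]

theorem map_nijBracket_nijBracket {b : L → L → L → L} {F : Type*} [FunLike F L L]
    [AddMonoidHomClass F L L] {N : F}
    (hN : ∀ x y z, N (nijBracket b N x y z) = b (N x) (N y) (N z)) (x y z : L) :
    N (nijBracket (nijBracket b N) N x y z) = nijBracket b N (N x) (N y) (N z) := by
  rw [nijBracket]
  simp only [map_add, map_sub, hN]
  simp only [nijBracket, map_add]

end Brackets

namespace IsTernaryLeibnizR

variable {K L : Type*} [Field K] [AddCommGroup L] [Module K L] {b : L → L → L → L}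

theorem map_add₁ (h : IsTernaryLeibnizR K b) (x x' y z : L) :
    b (x + x') y z = b x y z + b x' y z :=
  (h.lin₁ y z).map_add x x'

theorem map_add₂ (h : IsTernaryLeibnizR K b) (x y y' z : L) :
    b x (y + y') z = b x y z + b x y' z :=
  (h.lin₂ x z).map_add y y'

theorem map_add₃ (h : IsTernaryLeibnizR K b) (x y z z' : L) :
    b x y (z + z') = b x y z + b x y z' :=
  (h.lin₃ x y).map_add z z'

theorem map_sub₁ (h : IsTernaryLeibnizR K b) (x x' y z : L) :
    b (x - x') y z = b x y z - b x' y z :=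
  (h.lin₁ y z).map_sub x x'

theorem map_sub₂ (h : IsTernaryLeibnizR K b) (x y y' z : L) :
    b x (y - y') z = b x y z - b x y' z :=
  (h.lin₂ x z).map_sub y y'

theorem map_sub₃ (h : IsTernaryLeibnizR K b) (x y z z' : L) :
    b x y (z - z') = b x y z - b x y z' :=
  (h.lin₃ x y).map_sub z z'

theorem map_smul₁ (h : IsTernaryLeibnizR K b) (c : K) (x y z : L) :
    b (c • x) y z = c • b x y z :=
  (h.lin₁ y z).map_smul c x

theorem map_smul₂ (h : IsTernaryLeibnizR K b) (c : K) (x y z : L) :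
    b x (c • y) z = c • b x y z :=
  (h.lin₂ x z).map_smul c y

theorem map_smul₃ (h : IsTernaryLeibnizR K b) (c : K) (x y z : L) :
    b x y (c • z) = c • b x y z :=
  (h.lin₃ x y).map_smul c z

theorem leibnizator_eq_zero (h : IsTernaryLeibnizR K b) (x y z t u : L) :
    leibnizator b b x y z t u = 0 :=
  sub_eq_zero.mpr (h.leib x y z t u)

theorem isLinearMap_nijBracket₁ (h : IsTernaryLeibnizR K b) (N : L →ₗ[K] L) (y z : L) :
    IsLinearMap K fun x => nijBracket b N x y z where
  map_add x x' := by simp only [nijBracket, map_add, h.map_add₁]; abel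
  map_smul c x := by simp only [nijBracket, map_add, map_smul, h.map_smul₁, smul_add, smul_sub]

theorem isLinearMap_nijBracket₂ (h : IsTernaryLeibnizR K b) (N : L →ₗ[K] L) (x z : L) :
    IsLinearMap K fun y => nijBracket b N x y z where
  map_add y y' := by simp only [nijBracket, map_add, h.map_add₂]; abel
  map_smul c y := by simp only [nijBracket, map_add, map_smul, h.map_smul₂, smul_add, smul_sub]

theorem isLinearMap_nijBracket₃ (h : IsTernaryLeibnizR K b) (N : L →ₗ[K] L) (x y : L) :
    IsLinearMap K fun z => nijBracket b N x y z where
  map_add z z' := by simp only [nijBracket, map_add, h.map_add₃]; abel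
  map_smul c z := by simp only [nijBracket, map_add, map_smul, h.map_smul₃, smul_add, smul_sub]

variable {F : Type*} [FunLike F L L] [AddMonoidHomClass F L L]

theorem leibnizator_nijBracketLin_add (h : IsTernaryLeibnizR K b) (N : F) (x y z t u : L) :
    leibnizator (nijBracketLin b N) b x y z t u + leibnizator b (nijBracketLin b N) x y z t u
      = 0 := by
  have J := h.leibnizator_eq_zero
  linear_combination (norm := (simp only [leibnizator, nijBracketLin, map_add, map_sub,
      map_zero, h.map_add₁, h.map_add₂, h.map_add₃, h.map_sub₁, h.map_sub₂, h.map_sub₃]; abel))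
    J (N x) y z t u + J x (N y) z t u + J x y (N z) t u + J x y z (N t) u + J x y z t (N u)
      - congrArg N (J x y z t u)

theorem leibnizator_nijBracket_add (h : IsTernaryLeibnizR K b) (N : F) (x y z t u : L) :
    leibnizator (nijBracket b N) b x y z t u
      + leibnizator (nijBracketLin b N) (nijBracketLin b N) x y z t u
      + leibnizator b (nijBracket b N) x y z t u = 0 := by
  have J := h.leibnizator_eq_zero
  linear_combination (norm := (simp only [leibnizator, nijBracketLin, nijBracket, map_add, map_sub,
      map_zero, h.map_add₁, h.map_add₂, h.map_add₃, h.map_sub₁, h.map_sub₂, h.map_sub₃]; abel))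
    J (N x) (N y) z t u + J (N x) y (N z) t u + J (N x) y z (N t) u + J (N x) y z t (N u)
      + J x (N y) (N z) t u + J x (N y) z (N t) u + J x (N y) z t (N u)
      + J x y (N z) (N t) u + J x y (N z) t (N u) + J x y z (N t) (N u)
      - congrArg N (h.leibnizator_nijBracketLin_add N x y z t u)

theorem leibnizator_nijBracket_nijBracketLin_add (h : IsTernaryLeibnizR K b) {N : F}
    (hN : ∀ x y z, N (nijBracket b N x y z) = b (N x) (N y) (N z)) (x y z t u : L) :
    leibnizator (nijBracket b N) (nijBracketLin b N) x y z t u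
      + leibnizator (nijBracketLin b N) (nijBracket b N) x y z t u = 0 := by
  have J := h.leibnizator_eq_zero
  linear_combination (norm := (simp only [leibnizator, nijBracketLin, nijBracket, map_add, map_sub,
      map_zero, h.map_add₁, h.map_add₂, h.map_add₃, h.map_sub₁, h.map_sub₂, h.map_sub₃]; abel))
    J (N x) (N y) (N z) t u + J (N x) (N y) z (N t) u + J (N x) (N y) z t (N u)
      + J (N x) y (N z) (N t) u + J (N x) y (N z) t (N u) + J (N x) y z (N t) (N u)
      + J x (N y) (N z) (N t) u + J x (N y) (N z) t (N u) + J x (N y) z (N t) (N u)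
      + J x y (N z) (N t) (N u)
      - congrArg N (h.leibnizator_nijBracket_add N x y z t u)
      + hN (b x y z) t u - hN x y (b z t u) - hN x (b y t u) z - hN (b x t u) y z
      + congrArg (b · t u) (hN x y z) - congrArg (b x y ·) (hN z t u)
      - congrArg (b x · z) (hN y t u) - congrArg (b · y z) (hN x t u)

theorem leibnizator_nijBracket_self (h : IsTernaryLeibnizR K b) {N : F}
    (hN : ∀ x y z, N (nijBracket b N x y z) = b (N x) (N y) (N z)) (x y z t u : L) :
    leibnizator (nijBracket b N) (nijBracket b N) x y z t u = 0 := by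
  have J := h.leibnizator_eq_zero
  linear_combination (norm := (simp only [leibnizator, nijBracketLin, nijBracket, map_add, map_sub,
      map_zero, h.map_add₁, h.map_add₂, h.map_add₃, h.map_sub₁, h.map_sub₂, h.map_sub₃]; abel))
    J x (N y) (N z) (N t) (N u) + J (N x) y (N z) (N t) (N u) + J (N x) (N y) z (N t) (N u)
      + J (N x) (N y) (N z) t (N u) + J (N x) (N y) (N z) (N t) u
      - congrArg N (h.leibnizator_nijBracket_nijBracketLin_add hN x y z t u)
      + hN (nijBracketLin b N x y z) t u - hN x y (nijBracketLin b N z t u)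
      - hN x (nijBracketLin b N y t u) z - hN (nijBracketLin b N x t u) y z
      + congrArg (b · (N t) u) (hN x y z) + congrArg (b · t (N u)) (hN x y z)
      - congrArg (b (N x) y ·) (hN z t u) - congrArg (b x (N y) ·) (hN z t u)
      - congrArg (b (N x) · z) (hN y t u) - congrArg (b x · (N z)) (hN y t u)
      - congrArg (b · (N y) z) (hN x t u) - congrArg (b · y (N z)) (hN x t u)

protected theorem nijBracket (h : IsTernaryLeibnizR K b) {N : L →ₗ[K] L}
    (hN : ∀ x y z, N (nijBracket b N x y z) = b (N x) (N y) (N z)) :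
    IsTernaryLeibnizR K (nijBracket b N) where
  lin₁ := h.isLinearMap_nijBracket₁ N
  lin₂ := h.isLinearMap_nijBracket₂ N
  lin₃ := h.isLinearMap_nijBracket₃ N
  leib x y z t u := sub_eq_zero.mp (h.leibnizator_nijBracket_self hN x y z t u)

end IsTernaryLeibnizR

theorem nijenhuis_ternaryLeibniz {K L : Type*} [Field K] [AddCommGroup L] [Module K L]
    (b : L → L → L → L) (h : IsTernaryLeibnizR K b) (N : L →ₗ[K] L)
    (hN : ∀ x y z, b (N x) (N y) (N z)
      = N (b (N x) (N y) z + b (N x) y (N z) + b x (N y) (N z)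
          - N (b (N x) y z + b x (N y) z + b x y (N z)) + N (N (b x y z)))) :
    IsTernaryLeibnizR K (nijBracket b N)
    ∧ (∀ x y z, N (nijBracket b N x y z) = b (N x) (N y) (N z))
    ∧ (∀ x y z, nijBracket b N (N x) (N y) (N z)
      = N (nijBracket b N (N x) (N y) z + nijBracket b N (N x) y (N z)
            + nijBracket b N x (N y) (N z)
          - N (nijBracket b N (N x) y z + nijBracket b N x (N y) z
                + nijBracket b N x y (N z))
          + N (N (nijBracket b N x y z)))) := by
  have hmap := isNijenhuis_iff_map_nijBracket.mp hN
  exact ⟨h.nijBracket hmap, hmap,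
    isNijenhuis_iff_map_nijBracket.mpr (map_nijBracket_nijBracket hmap)⟩
end

section
/- Let (L, [-,-]) be a (right) Leibniz algebra over a field K and let R : L → L be a Rota–Baxter operator of weight λ ∈ K on L. For x,y,z ∈ L let [x,y]_R = [R(x),y] + [x,R(y)] + λ[x,y] and let {x,y,z} = [x,[y,z]]. Then for all x,y,z ∈ L one has [x, [y,z]_R]_R = {R(x),R(y),z} + {R(x),y,R(z)} + {x,R(y),R(z)} + λ{R(x),y,z} + λ{x,R(y),z} + λ{x,y,R(z)} + λ²{x,y,z}; that is, the ternary bracket associated to the Rota–Baxter deformed Leibniz algebra (L, [-,-]_R) coincides with the Rota–Baxter deformation (by R and λ) of the ternary bracket {-,-,-} associated to (L, [-,-]). -/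
/-!
Unfolding the outer deformed bracket gives `[R x, w] + [x, R w] + λ [x, w]` with `w = [y, z]_R`.
The Rota–Baxter identity turns `R w` into `[R y, R z]`, and expanding the remaining brackets by
linearity in the second argument produces exactly the seven terms of the deformed ternary bracket.
-/

structure IsLeibnizR (K : Type*) [Field K] {L : Type*} [AddCommGroup L] [Module K L]
    (b : L → L → L) : Prop where
  lin₁ : ∀ y, IsLinearMap K (fun x => b x y)
  lin₂ : ∀ x, IsLinearMap K (fun y => b x y)
  leib : ∀ x y z, b (b x y) z = b x (b y z) + b (b x z) y

section RotaBaxter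

variable {K L : Type*} [Semiring K] [AddCommMonoid L] [Module K L]

def rbBracket (b : L → L → L) (R : L → L) (lam : K) (u v : L) : L :=
  b (R u) v + b u (R v) + lam • b u v

def rbTernary (t : L → L → L → L) (R : L → L) (lam : K) (x y z : L) : L :=
  t (R x) (R y) z + t (R x) y (R z) + t x (R y) (R z)
    + lam • t (R x) y z + lam • t x (R y) z + lam • t x y (R z) + (lam ^ 2) • t x y z

def IsRotaBaxter (b : L → L → L) (R : L → L) (lam : K) : Prop :=
  ∀ x y, b (R x) (R y) = R (rbBracket b R lam x y)

theorem rbBracket_rbBracket {b : L → L → L} {R : L → L} {lam : K}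
    (hb : ∀ x, IsLinearMap K (b x)) (hR : IsRotaBaxter b R lam) (x y z : L) :
    rbBracket b R lam x (rbBracket b R lam y z)
      = rbTernary (fun x y z => b x (b y z)) R lam x y z := by
  have hadd : ∀ u v w, b u (v + w) = b u v + b u w := fun u => (hb u).map_add
  have hsmul : ∀ u (c : K) v, b u (c • v) = c • b u v := fun u => (hb u).map_smul
  rw [rbBracket, ← hR y z]
  simp only [rbBracket, rbTernary, hadd, hsmul, smul_add, smul_smul, ← sq]
  abel

end RotaBaxter

theorem ternary_of_rb_eq_rb_of_ternary {K L : Type*} [Field K] [AddCommGroup L] [Module K L]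
    (b : L → L → L) (h : IsLeibnizR K b) (R : L →ₗ[K] L) (lam : K)
    (hR : ∀ x y, b (R x) (R y) = R (b (R x) y + b x (R y) + lam • b x y)) :
    ∀ x y z,
      (fun u v => b (R u) v + b u (R v) + lam • b u v) x
          ((fun u v => b (R u) v + b u (R v) + lam • b u v) y z)
        = b (R x) (b (R y) z) + b (R x) (b y (R z)) + b x (b (R y) (R z))
          + lam • b (R x) (b y z) + lam • b x (b (R y) z) + lam • b x (b y (R z))
          + (lam ^ 2) • b x (b y z) :=
  rbBracket_rbBracket h.lin₂ hR
end
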